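/- For every nonempty partition λ there exist integers d_{λ,μ}, indexed by the partitions μ of |λ|+1 with μ < (λ,1) in the lexicographic order, such that D_{u₀u₁}(u_λ) = (|λ| + ℓ(λ) − m₁(λ) − 1)·u_λ·u₁ + ∂ₓ(u₀·u_λ) + ∑_{μ∈𝒫_{|λ|+1}, μ<(λ,1)} d_{λ,μ}·u_μ. -/

import Mathlib

/-!
Since `D_{u₀u₁}` is a derivation, `D_{u₀u₁}(u_λ) = ∑ₖ mₖ(λ) ∂ₓᵏ(u₀u₁) u_{λ∖k}`, and the
Leibniz rule gives `∂ₓᵏ(u₀u₁) = ∑ⱼ C(k,j) uⱼ u_{k+1-j}`. The terms `j = 0` add up to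
`∂ₓ(u₀u_λ) - u₁u_λ`; the terms `j = 1` and `j = k` give `k + 1` copies of `u₁u_λ` (only one
when `k = 1`), which add up to `|λ| + ℓ(λ) - m₁(λ)` copies; every remaining term,
`2 ≤ j ≤ k - 1`, replaces the parts `k, 1` of `(λ,1)` by `j, k + 1 - j < k` and so is `u_μ` for
a lexicographically smaller `μ`.
-/

open scoped Classical
open PowerSeries

noncomputable section

namespace RiemannPaper

/-- ℂ[[u₀]] -/
abbrev RR : Type := PowerSeries ℂ
/-- 𝒜 = ℂ[[u₀]][u₁,u₂,…] -/
abbrev AA : Type := MvPolynomial ℕ+ RR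
/-- 𝒜̂ = 𝒜[[ε]] -/
abbrev AH : Type := PowerSeries AA

/-- the variable uₙ as an element of 𝒜 (u₀ is the power-series variable of the coefficients) -/
def uv (n : ℕ) : AA :=
  if h : 0 < n then MvPolynomial.X (⟨n, h⟩ : ℕ+) else MvPolynomial.C PowerSeries.X

/-- ∂/∂u₀ on 𝒜 -/
def pd0 (f : AA) : AA :=
  ∑ m ∈ f.support, MvPolynomial.monomial m (PowerSeries.derivativeFun (MvPolynomial.coeff m f))

/-- ∂/∂uₙ on 𝒜 -/
def pdA : ℕ → AA → AA
  | 0 => pd0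
  | (n+1) => fun f => MvPolynomial.pderiv (⟨n+1, n.succ_pos⟩ : ℕ+) f

/-- ∂ₓ on 𝒜 -/
def dxA (f : AA) : AA := ∑ᶠ n : ℕ, uv (n+1) * pdA n f

/-- coefficientwise (ℂ[[ε]]-linear) extension of an operator on 𝒜 to 𝒜̂ -/
def lift1 (F : AA → AA) (h : AH) : AH := PowerSeries.mk fun k => F (PowerSeries.coeff k h)

/-- ∂ₓ on 𝒜̂ -/
def dxH : AH → AH := lift1 dxA
/-- ∂/∂uₙ on 𝒜̂ -/
def pdH (n : ℕ) : AH → AH := lift1 (pdA n)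
def negDxA (f : AA) : AA := -dxA f
def negDxH (h : AH) : AH := -dxH h

/-- evolutionary operator D_P = ∑ₙ (∂ₓⁿP)·∂/∂uₙ on 𝒜 -/
def DopA (P f : AA) : AA := ∑ᶠ n : ℕ, (dxA^[n] P) * pdA n f
/-- evolutionary operator D_P on 𝒜̂ -/
def DopH (P f : AH) : AH :=
  PowerSeries.mk fun k => ∑ᶠ n : ℕ, PowerSeries.coeff k ((dxH^[n] P) * pdH n f)

/-- variational derivative δ/δu = ∑ₙ(−∂ₓ)ⁿ∘∂/∂uₙ on 𝒜 -/
def varDA (f : AA) : AA := ∑ᶠ n : ℕ, negDxA^[n] (pdA n f)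
/-- variational derivative on 𝒜̂ -/
def varD (f : AH) : AH :=
  PowerSeries.mk fun k => ∑ᶠ n : ℕ, PowerSeries.coeff k (negDxH^[n] (pdH n f))

/-- weighted degree of a monomial, deg uₙ = n -/
def wdeg (m : ℕ+ →₀ ℕ) : ℕ := m.sum fun i e => (i : ℕ) * e
/-- f is homogeneous of differential degree d -/
def homogA (f : AA) (d : ℤ) : Prop := ∀ m ∈ f.support, (wdeg m : ℤ) = d
/-- f ∈ 𝒜̂_d (deg ε = −1) -/
def memAH (d : ℤ) (f : AH) : Prop := ∀ k : ℕ, homogA (PowerSeries.coeff k f) (d + k)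

/-- Im ∂ₓ ⊕ ℂ ⊂ 𝒜, so that Λ = 𝒜/NA -/
def NA : Submodule ℂ AA := Submodule.span ℂ (Set.range dxA ∪ Set.range (algebraMap ℂ AA))
/-- Im ∂ₓ ⊕ ℂ[[ε]] ⊂ 𝒜̂, so that Λ̂ = 𝒜̂/NH -/
def NH : Submodule ℂ AH :=
  Submodule.span ℂ (Set.range dxH ∪ Set.range (⇑(PowerSeries.map (algebraMap ℂ AA))))

/-- ε ∈ 𝒜̂ -/
def epsH : AH := PowerSeries.X
/-- uₙ as an element of 𝒜̂ -/
def uH (n : ℕ) : AH := PowerSeries.C (uv n)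

/-- a differential operator K = ∑ᵢ Kᵢ∂ₓ^i (finite sum) applied to f -/
def opApply (K : ℕ →₀ AH) (f : AH) : AH := K.sum fun i c => c * dxH^[i] f
/-- L(Q) = ∑ₙ(∂Q/∂uₙ)∂ₓⁿ applied to f -/
def Lapp (Q f : AH) : AH :=
  PowerSeries.mk fun k => ∑ᶠ n : ℕ, PowerSeries.coeff k (pdH n Q * dxH^[n] f)
/-- L(Q)† = ∑ₙ(−∂ₓ)ⁿ∘(∂Q/∂uₙ) applied to f -/
def LadjApp (Q f : AH) : AH :=
  PowerSeries.mk fun k => ∑ᶠ n : ℕ, PowerSeries.coeff k (negDxH^[n] (pdH n Q * f))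

/-- canonical representative of the bracket {f̄,h̄}_K = ∫ δf̄/δu · K(δh̄/δu) dx -/
def brRep (K : ℕ →₀ AH) (f h : AH) : AH := varD f * opApply K (varD h)
/-- K is a Poisson operator: the bracket is skew-symmetric and satisfies Jacobi (in Λ̂) -/
def IsPoisson (K : ℕ →₀ AH) : Prop :=
  (∀ f h : AH, brRep K f h + brRep K h f ∈ NH) ∧
  (∀ f g h : AH,
    brRep K (brRep K f g) h + brRep K (brRep K g h) f + brRep K (brRep K h f) g ∈ NH)

/-- K has degree 1 -/
def opDeg1 (K : ℕ →₀ AH) : Prop := ∀ i : ℕ, memAH (1 - (i : ℤ)) (K i)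
/-- K|_{ε=0} = ∂ₓ -/
def opEps0Dx (K : ℕ →₀ AH) : Prop :=
  ∀ i : ℕ, PowerSeries.coeff 0 (K i) = if i = 1 then 1 else 0

/-- g ∈ ℂ[[u₀]] as an element of 𝒜̂ -/
def cH (g : RR) : AH := PowerSeries.C (MvPolynomial.C g)
/-- truncation of an element of 𝒜̂ keeping the ε-coefficients up to εᵏ -/
def truncAH (k : ℕ) (h : AH) : AH :=
  ∑ i ∈ Finset.range (k+1), (PowerSeries.monomial i) (PowerSeries.coeff i h)
/-- the Taylor evaluation g(w) for g ∈ ℂ[[u₀]] and w ≡ u₀ mod ε -/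
def tayl (g : RR) (w : AH) : AH := PowerSeries.mk fun k =>
  PowerSeries.coeff k (∑ j ∈ Finset.range (k+1),
    ((j.factorial : ℂ))⁻¹ • (cH (PowerSeries.derivativeFun^[j] g) * (w - uH 0) ^ j))

/-- S is the substitution map S_w, the unique continuous ℂ[[ε]]-algebra endomorphism of 𝒜̂
with S(uₙ) = ∂ₓⁿ(w) -/
structure IsSubst (w : AH) (S : AH → AH) : Prop where
  map_add : ∀ a b, S (a + b) = S a + S b
  map_mul : ∀ a b, S (a * b) = S a * S b
  map_one : S 1 = 1
  map_smul : ∀ (c : ℂ) (a), S (c • a) = c • S a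
  map_eps : ∀ a, S (epsH * a) = epsH * S a
  map_u : ∀ n : ℕ, S (uH n) = dxH^[n] w
  map_ps : ∀ g : RR, S (cH g) = tayl g w
  cont : ∀ a (k : ℕ),
    PowerSeries.coeff k (S a) = PowerSeries.coeff k (S (truncAH k a))

/-- w is a Miura transformation: w = u₀ + εf, f ∈ 𝒜̂₁ -/
def isMiura (w : AH) : Prop := ∃ f : AH, memAH 1 f ∧ w = uH 0 + epsH * f
/-- w belongs to Mi_{∂ₓ}: L(w)∘∂ₓ∘L(w)† = ∂ₓ -/
def inMiDx (w : AH) : Prop := ∀ f : AH, Lapp w (dxH (LadjApp w f)) = dxH f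
/-- w is a normal Miura transformation: w = u₀ + ∂ₓ²P, P ∈ 𝒜̂₋₂ -/
def isNormalMiura (w : AH) : Prop := ∃ P : AH, memAH (-2) P ∧ w = uH 0 + dxH (dxH P)

/-- u_λ = ∏ᵢ u_{λᵢ} -/
def uP {n : ℕ} (l : n.Partition) : AA := (l.parts.map uv).prod
/-- the parts of λ sorted in decreasing order -/
def sortedParts {n : ℕ} (l : n.Partition) : List ℕ := (l.parts.sort (· ≤ ·)).reverse
/-- lexicographic order on partitions -/
def lexLt {n : ℕ} (l m : n.Partition) : Prop :=
  List.Lex (· < ·) (sortedParts l) (sortedParts m)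
def lexLe {n : ℕ} (l m : n.Partition) : Prop := lexLt l m ∨ l = m
/-- λ ∈ 𝒫ₙ°: at least two parts and λ₁ = λ₂ -/
def Pcirc {n : ℕ} (l : n.Partition) : Prop :=
  2 ≤ Multiset.card l.parts ∧ (sortedParts l).getD 0 0 = (sortedParts l).getD 1 0
/-- λ ∈ 𝒫ₙ′: λ ∈ 𝒫ₙ° and all parts ≥ 2 -/
def Pprime {n : ℕ} (l : n.Partition) : Prop := Pcirc l ∧ ∀ i ∈ l.parts, 2 ≤ i
/-- (λ,1): adjoin a part equal to 1 -/
def addOne {n : ℕ} (l : n.Partition) : (n+1).Partition where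
  parts := 1 ::ₘ l.parts
  parts_pos := by
    intro i hi
    rcases Multiset.mem_cons.mp hi with h | h
    · simp [h]
    · exact l.parts_pos h
  parts_sum := by simp [l.parts_sum, add_comm]

end RiemannPaper

open Finset

theorem Derivation.iterate_map_mul {R A : Type*} [CommSemiring R] [CommSemiring A] [Algebra R A]
    (D : Derivation R A A) (n : ℕ) (a b : A) :
    D^[n] (a * b) = ∑ i ∈ range (n + 1), n.choose i • (D^[i] a * D^[n - i] b) := by
  rw [← Nat.sum_antidiagonal_eq_sum_range_succ (fun i j => n.choose i • (D^[i] a * D^[j] b))]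
  induction n with
  | zero => simp
  | succ n ih =>
    rw [sum_antidiagonal_choose_succ_nsmul (fun i j => D^[i] a * D^[j] b) n]
    simp only [Function.iterate_succ_apply', ih, map_sum, map_nsmul, Derivation.leibniz,
      smul_eq_mul, smul_add, sum_add_distrib]
    congr 1
    refine sum_congr rfl fun ij hij => ?_
    rw [n.choose_symm_of_eq_add (mem_antidiagonal.1 hij).symm, mul_comm]

theorem List.lex_lt_of_count_lt {α : Type*} [LinearOrder α] {L₁ L₂ : List α}
    (h₁ : L₁.Pairwise (· ≥ ·)) (h₂ : L₂.Pairwise (· ≥ ·)) {e : α}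
    (hlt : L₁.count e < L₂.count e) (heq : ∀ f, e < f → L₁.count f = L₂.count f) :
    List.Lex (· < ·) L₁ L₂ := by
  induction L₂ generalizing L₁ with
  | nil => simp at hlt
  | cons b t₂ ih =>
    cases L₁ with
    | nil => exact List.Lex.nil
    | cons a t₁ =>
      rcases lt_trichotomy a b with hab | rfl | hba
      · exact List.Lex.rel hab
      · refine List.Lex.cons (ih (List.pairwise_cons.mp h₁).2 (List.pairwise_cons.mp h₂).2 ?_ ?_)
        · simpa [List.count_cons] using hlt
        · intro f hf
          simpa [List.count_cons] using heq f hf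
      · have hle : ∀ x ∈ b :: t₂, x ≤ b := by
          intro x hx
          rcases List.mem_cons.mp hx with rfl | hx
          exacts [le_rfl, (List.pairwise_cons.mp h₂).1 x hx]
        have habsent : ∀ x, b < x → (b :: t₂).count x = 0 := fun x hx =>
          List.count_eq_zero.mpr fun hmem => (hle x hmem).not_gt hx
        rcases lt_or_ge e a with hea | hae
        · have := heq a hea
          rw [habsent a hba] at this
          exact ((List.count_pos_iff.mpr List.mem_cons_self).ne' this).elim
        · rw [habsent e (hba.trans_le hae)] at hlt
          exact absurd hlt (Nat.not_lt_zero _)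

namespace RiemannPaper

lemma coeff_pd0 (f : AA) (m : ℕ+ →₀ ℕ) :
    (pd0 f).coeff m = d⁄dX ℂ (f.coeff m) := by
  change (∑ m' ∈ f.support, MvPolynomial.monomial m' (d⁄dX ℂ (f.coeff m'))).coeff m = _
  rw [MvPolynomial.coeff_sum, sum_eq_single m]
  · simp [MvPolynomial.coeff_monomial]
  · intro b _ hb
    simp [MvPolynomial.coeff_monomial, hb]
  · intro hm
    simp [MvPolynomial.notMem_support_iff.mp hm]

lemma pd0_add (f g : AA) : pd0 (f + g) = pd0 f + pd0 g := by
  ext m : 1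
  simp [coeff_pd0]

lemma pd0_mul (f g : AA) : pd0 (f * g) = pd0 f * g + f * pd0 g := by
  ext m : 1
  simp only [coeff_pd0, MvPolynomial.coeff_add, MvPolynomial.coeff_mul, map_sum,
    Derivation.leibniz, smul_eq_mul, ← sum_add_distrib]
  exact sum_congr rfl fun _ _ => by ring

lemma pd0_C (g : RR) : pd0 (MvPolynomial.C g) = MvPolynomial.C (d⁄dX ℂ g) := by
  ext m : 1
  rw [coeff_pd0, MvPolynomial.coeff_C, MvPolynomial.coeff_C]
  split_ifs <;> simp

lemma pd0_X (i : ℕ+) : pd0 (MvPolynomial.X i) = 0 := by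
  ext m : 1
  simp [coeff_pd0, MvPolynomial.coeff_X, apply_ite, Derivation.map_one_eq_zero]

lemma pdA_add (k : ℕ) (f g : AA) : pdA k (f + g) = pdA k f + pdA k g := by
  cases k with
  | zero => exact pd0_add f g
  | succ n => exact map_add _ f g

lemma pdA_mul (k : ℕ) (f g : AA) : pdA k (f * g) = pdA k f * g + f * pdA k g := by
  cases k with
  | zero => exact pd0_mul f g
  | succ n => exact MvPolynomial.pderiv_mul

lemma pdA_one (k : ℕ) : pdA k 1 = 0 := by
  simpa using pdA_mul k 1 1

lemma uv_zero : uv 0 = MvPolynomial.C PowerSeries.X := rfl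

lemma uv_succ (i : ℕ) : uv (i + 1) = MvPolynomial.X (⟨i + 1, i.succ_pos⟩ : ℕ+) := rfl

lemma pdA_uv (k j : ℕ) : pdA k (uv j) = if j = k then 1 else 0 := by
  cases k with
  | zero =>
    cases j with
    | zero => simp [pdA, uv_zero, pd0_C]
    | succ i => exact (pd0_X _).trans (if_neg (by omega)).symm
  | succ n =>
    cases j with
    | zero => exact MvPolynomial.pderiv_C.trans (if_neg (by omega)).symm
    | succ i =>
      simp only [pdA, uv_succ, MvPolynomial.pderiv_X, Pi.single_apply, Subtype.mk.injEq,
        Nat.add_right_cancel_iff]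
      congr

def uProd (s : Multiset ℕ) : AA := (s.map uv).prod

lemma uProd_cons (a : ℕ) (s : Multiset ℕ) : uProd (a ::ₘ s) = uv a * uProd s := by
  simp [uProd]

lemma uv_mul_uProd_erase {k : ℕ} {s : Multiset ℕ} (hk : k ∈ s) :
    uv k * uProd (s.erase k) = uProd s := by
  rw [← uProd_cons, Multiset.cons_erase hk]

lemma pdA_uProd (k : ℕ) (s : Multiset ℕ) : pdA k (uProd s) = s.count k • uProd (s.erase k) := by
  induction s using Multiset.induction_on with
  | empty => simp [uProd, pdA_one]
  | cons a s ih =>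
    rw [uProd_cons, pdA_mul, pdA_uv, ih, mul_smul_comm]
    by_cases hak : a = k
    · subst hak
      by_cases has : a ∈ s
      · rw [if_pos rfl, one_mul, uv_mul_uProd_erase has, Multiset.count_cons_self,
          Multiset.erase_cons_head, succ_nsmul, add_comm]
      · simp [Multiset.count_eq_zero_of_notMem has]
    · simp [hak, Multiset.count_cons_of_ne (Ne.symm hak), uProd_cons]

lemma finite_support_pdA (f : AA) : (Function.support fun n => pdA n f).Finite := by
  refine (((f.vars.finite_toSet.image PNat.val).insert 0)).subset fun n hn => ?_
  cases n with
  | zero => exact Set.mem_insert _ _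
  | succ m =>
    refine Or.inr ⟨⟨m + 1, m.succ_pos⟩, ?_, rfl⟩
    by_contra hv
    exact hn (MvPolynomial.pderiv_eq_zero_of_notMem_vars hv)

lemma finite_support_mul_pdA (c : ℕ → AA) (f : AA) :
    (Function.support fun n => c n * pdA n f).Finite :=
  (finite_support_pdA f).subset (Function.support_mul_subset_right _ _)

lemma finsum_mul_pdA_uProd (c : ℕ → AA) (s : Multiset ℕ) :
    ∑ᶠ n, c n * pdA n (uProd s) = ∑ k ∈ s.toFinset, s.count k • (c k * uProd (s.erase k)) := by
  simp_rw [pdA_uProd, mul_smul_comm]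
  refine finsum_eq_sum_of_support_subset _ fun n hn => ?_
  rw [mem_coe, Multiset.mem_toFinset]
  by_contra h
  exact hn (by simp [Multiset.count_eq_zero_of_notMem h])

lemma dxA_add (f g : AA) : dxA (f + g) = dxA f + dxA g := by
  simp only [dxA, pdA_add, mul_add]
  exact finsum_add_distrib (finite_support_mul_pdA _ f) (finite_support_mul_pdA _ g)

lemma dxA_mul (f g : AA) : dxA (f * g) = dxA f * g + f * dxA g := by
  simp only [dxA]
  rw [finsum_mul' _ _ (finite_support_mul_pdA _ f), mul_finsum' _ _ (finite_support_mul_pdA _ g),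
    ← finsum_add_distrib]
  · exact finsum_congr fun n => by rw [pdA_mul]; ring
  · exact (finite_support_mul_pdA _ f).subset (Function.support_mul_subset_left _ _)
  · exact (finite_support_mul_pdA _ g).subset (Function.support_mul_subset_right _ _)

def dxDerivation : Derivation ℤ AA AA :=
  Derivation.mk' (AddMonoidHom.mk' dxA dxA_add).toIntLinearMap fun a b => by
    show dxA (a * b) = a • dxA b + b • dxA a
    rw [dxA_mul, smul_eq_mul, smul_eq_mul]
    ring

lemma dxA_uv (m : ℕ) : dxA (uv m) = uv (m + 1) := by
  rw [dxA, finsum_eq_single _ m fun n hn => by simp [pdA_uv, Ne.symm hn]]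
  simp [pdA_uv]

lemma iterate_dxA_uv (k m : ℕ) : dxA^[k] (uv m) = uv (k + m) := by
  induction k with
  | zero => simp
  | succ k ih => rw [Function.iterate_succ_apply', ih, dxA_uv, add_right_comm]

lemma dxA_uProd (s : Multiset ℕ) :
    dxA (uProd s) = ∑ k ∈ s.toFinset, s.count k • (uv (k + 1) * uProd (s.erase k)) :=
  finsum_mul_pdA_uProd _ s

lemma DopA_uProd (P : AA) (s : Multiset ℕ) :
    DopA P (uProd s) = ∑ k ∈ s.toFinset, s.count k • (dxA^[k] P * uProd (s.erase k)) :=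
  finsum_mul_pdA_uProd _ s

lemma iterate_dxA_u0_mul_u1 (k : ℕ) :
    dxA^[k] (uv 0 * uv 1) = ∑ j ∈ range (k + 1), k.choose j • (uv j * uv (k + 1 - j)) := by
  have leibniz : dxA^[k] (uv 0 * uv 1)
      = ∑ j ∈ range (k + 1), k.choose j • (dxA^[j] (uv 0) * dxA^[k - j] (uv 1)) :=
    dxDerivation.iterate_map_mul k _ _
  rw [leibniz]
  refine sum_congr rfl fun j hj => ?_
  rw [iterate_dxA_uv, iterate_dxA_uv, add_zero,
    Nat.sub_add_comm (Nat.lt_succ_iff.mp (mem_range.mp hj))]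

def midTerms (k : ℕ) : AA := ∑ j ∈ Icc 2 (k - 1), k.choose j • (uv j * uv (k + 1 - j))

lemma iterate_dxA_u0_mul_u1_eq {k : ℕ} (hk : 1 ≤ k) :
    dxA^[k] (uv 0 * uv 1) = uv 0 * uv (k + 1)
      + ((k + 1 : ℤ) - if k = 1 then 1 else 0) • (uv 1 * uv k) + midTerms k := by
  rw [iterate_dxA_u0_mul_u1, midTerms]
  obtain rfl | hk2 : k = 1 ∨ 2 ≤ k := by omega
  · simp [sum_range_succ]
  · have hsplit : range (k + 1) = insert 0 (insert 1 (insert k (Icc 2 (k - 1)))) := by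
      ext x
      simp only [mem_range, mem_insert, mem_Icc]
      omega
    rw [hsplit, sum_insert (by simp only [mem_insert, mem_Icc]; omega),
      sum_insert (by simp only [mem_insert, mem_Icc]; omega),
      sum_insert (by simp only [mem_Icc]; omega), if_neg (by omega)]
    simp only [Nat.choose_zero_right, Nat.choose_one_right, Nat.choose_self,
      Nat.sub_zero, Nat.add_sub_cancel, Nat.add_sub_cancel_left]
    rw [mul_comm (uv k)]
    module

lemma sum_count_mul_succ_sub_ite (s : Multiset ℕ) :
    ∑ k ∈ s.toFinset, (s.count k : ℤ) * ((k + 1 : ℤ) - if k = 1 then 1 else 0)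
      = s.sum + Multiset.card s - s.count 1 := by
  have hsum : ∑ k ∈ s.toFinset, (s.count k : ℤ) * k = s.sum := by
    exact_mod_cast (sum_multiset_count s).symm
  have hcard : ∑ k ∈ s.toFinset, (s.count k : ℤ) = Multiset.card s := by
    exact_mod_cast Multiset.toFinset_sum_count_eq s
  have hone : ∑ k ∈ s.toFinset, (s.count k : ℤ) * (if k = 1 then 1 else 0) = s.count 1 := by
    simp only [mul_ite, mul_one, mul_zero, sum_ite_eq', Multiset.mem_toFinset]
    split_ifs with h
    · rfl
    · simp [Multiset.count_eq_zero_of_notMem h]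
  simp only [mul_sub, mul_add, mul_one, sum_sub_distrib, sum_add_distrib, hsum, hcard, hone]

lemma DopA_u0_mul_u1_uProd (s : Multiset ℕ) (hs : 0 ∉ s) :
    DopA (uv 0 * uv 1) (uProd s)
      = ((s.sum + Multiset.card s - s.count 1 - 1 : ℤ)) • (uProd s * uv 1)
        + dxA (uv 0 * uProd s)
        + ∑ k ∈ s.toFinset, s.count k • (midTerms k * uProd (s.erase k)) := by
  have hterm : ∀ k ∈ s.toFinset, s.count k • (dxA^[k] (uv 0 * uv 1) * uProd (s.erase k))
      = uv 0 * (s.count k • (uv (k + 1) * uProd (s.erase k)))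
        + ((s.count k : ℤ) * ((k + 1 : ℤ) - if k = 1 then 1 else 0)) • (uProd s * uv 1)
        + s.count k • (midTerms k * uProd (s.erase k)) := by
    intro k hk
    have hks : k ∈ s := Multiset.mem_toFinset.mp hk
    have hk1 : 1 ≤ k := Nat.one_le_iff_ne_zero.mpr fun h => hs (h ▸ hks)
    rw [iterate_dxA_u0_mul_u1_eq hk1, ← uv_mul_uProd_erase hks]
    simp only [nsmul_eq_mul, zsmul_eq_mul]
    push_cast
    ring
  rw [DopA_uProd, sum_congr rfl hterm, sum_add_distrib, sum_add_distrib, ← mul_sum, ← sum_smul,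
    sum_count_mul_succ_sub_ite, dxA_mul, dxA_uv, dxA_uProd]
  simp only [zsmul_eq_mul]
  push_cast
  ring

lemma count_sortedParts {N : ℕ} (p : N.Partition) (e : ℕ) :
    (sortedParts p).count e = p.parts.count e := by
  rw [sortedParts, List.count_reverse, ← Multiset.coe_count, Multiset.sort_eq]

lemma lexLt_of_count {N : ℕ} {p q : N.Partition} (e : ℕ)
    (hlt : p.parts.count e < q.parts.count e)
    (heq : ∀ f, e < f → p.parts.count f = q.parts.count f) : lexLt p q := by
  refine List.lex_lt_of_count_lt ?_ ?_ (e := e) ?_ fun f hf => ?_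
  · exact List.pairwise_reverse.mpr (Multiset.pairwise_sort _ _)
  · exact List.pairwise_reverse.mpr (Multiset.pairwise_sort _ _)
  · simpa only [count_sortedParts] using hlt
  · simpa only [count_sortedParts] using heq f hf

lemma lexLt_addOne_of_parts_eq {n : ℕ} (l : n.Partition) {k j : ℕ} (hk : k ∈ l.parts)
    (hj : j ∈ Icc 2 (k - 1)) {μ : (n + 1).Partition}
    (hμ : μ.parts = j ::ₘ (k + 1 - j) ::ₘ l.parts.erase k) : lexLt μ (addOne l) := by
  obtain ⟨hj2, hjk⟩ := mem_Icc.mp hj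
  have hparts : (addOne l).parts = 1 ::ₘ l.parts := rfl
  refine lexLt_of_count k ?_ fun f hf => ?_
  · rw [hμ, hparts, Multiset.count_cons_of_ne (by omega), Multiset.count_cons_of_ne (by omega),
      Multiset.count_cons_of_ne (by omega), Multiset.count_erase_self]
    exact Nat.sub_lt (Multiset.count_pos.mpr hk) one_pos
  · rw [hμ, hparts, Multiset.count_cons_of_ne (by omega), Multiset.count_cons_of_ne (by omega),
      Multiset.count_cons_of_ne (by omega), Multiset.count_erase_of_ne (by omega)]

def lexBelowSpan {N : ℕ} (p : N.Partition) : Submodule ℤ AA :=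
  Submodule.span ℤ (uP '' {m | lexLt m p})

lemma exists_coeff_of_mem_lexBelowSpan {N : ℕ} (p : N.Partition) {x : AA}
    (hx : x ∈ lexBelowSpan p) :
    ∃ dc : N.Partition → ℤ, ∑ m, (if lexLt m p then dc m • uP m else 0) = x := by
  obtain ⟨c, rfl⟩ := (Fintype.mem_span_image_iff_exists_fun ℤ).mp hx
  refine ⟨fun m => if h : lexLt m p then c ⟨m, h⟩ else 0, ?_⟩
  rw [← sum_filter, sum_subtype _ fun m => (by simp : m ∈ univ.filter _ ↔ m ∈ {m | lexLt m p})]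
  exact sum_congr rfl fun i _ => by simp only [dif_pos (show lexLt i.1 p from i.2)]

lemma mem_lexBelowSpan_addOne {n : ℕ} (l : n.Partition) {k j : ℕ} (hk : k ∈ l.parts)
    (hj : j ∈ Icc 2 (k - 1)) :
    uProd (j ::ₘ (k + 1 - j) ::ₘ l.parts.erase k) ∈ lexBelowSpan (addOne l) := by
  obtain ⟨hj2, hjk⟩ := mem_Icc.mp hj
  have hpos : ∀ {i}, i ∈ j ::ₘ (k + 1 - j) ::ₘ l.parts.erase k → 0 < i := by
    intro i hi
    rcases Multiset.mem_cons.mp hi with rfl | hi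
    · omega
    rcases Multiset.mem_cons.mp hi with rfl | hi
    · omega
    · exact l.parts_pos (Multiset.mem_of_mem_erase hi)
  have hsum : (j ::ₘ (k + 1 - j) ::ₘ l.parts.erase k).sum = n + 1 := by
    have := Multiset.sum_cons k (l.parts.erase k)
    rw [Multiset.cons_erase hk, l.parts_sum] at this
    simp only [Multiset.sum_cons]
    omega
  let μ : (n + 1).Partition := ⟨_, hpos, hsum⟩
  exact Submodule.subset_span ⟨μ, lexLt_addOne_of_parts_eq l hk hj rfl, rfl⟩

lemma midTerms_mul_mem_lexBelowSpan {n : ℕ} (l : n.Partition) {k : ℕ} (hk : k ∈ l.parts) :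
    midTerms k * uProd (l.parts.erase k) ∈ lexBelowSpan (addOne l) := by
  rw [midTerms, sum_mul]
  refine sum_mem fun j hj => ?_
  rw [smul_mul_assoc, mul_assoc, ← uProd_cons, ← uProd_cons]
  exact nsmul_mem (mem_lexBelowSpan_addOne l hk hj) _

theorem stmt2_general (n : ℕ) (l : n.Partition) :
    ∃ dc : (n+1).Partition → ℤ,
      DopA (uv 0 * uv 1) (uP l) =
        (((n : ℤ) + Multiset.card l.parts - l.parts.count 1 - 1)) • (uP l * uv 1)
        + dxA (uv 0 * uP l)
        + ∑ m : (n+1).Partition, if lexLt m (addOne l) then dc m • uP m else 0 := by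
  have hmid : ∑ k ∈ l.parts.toFinset, l.parts.count k • (midTerms k * uProd (l.parts.erase k))
      ∈ lexBelowSpan (addOne l) :=
    sum_mem fun k hk =>
      nsmul_mem (midTerms_mul_mem_lexBelowSpan l (Multiset.mem_toFinset.mp hk)) _
  obtain ⟨dc, hdc⟩ := exists_coeff_of_mem_lexBelowSpan _ hmid
  refine ⟨dc, ?_⟩
  have key := DopA_u0_mul_u1_uProd l.parts fun h => (l.parts_pos h).false
  rw [l.parts_sum] at key
  rwa [hdc]

/-- Lemma 2.2: D_{u₀u₁}(u_λ) = (|λ| + ℓ(λ) − m₁(λ) − 1)·u_λ·u₁ + ∂ₓ(u₀·u_λ)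
+ ∑_{μ∈𝒫_{|λ|+1}, μ<(λ,1)} d_{λ,μ}·u_μ for some integers d_{λ,μ}. -/
theorem stmt2 (n : ℕ) (hn : 0 < n) (l : n.Partition) :
    ∃ dc : (n+1).Partition → ℤ,
      DopA (uv 0 * uv 1) (uP l) =
        (((n : ℤ) + Multiset.card l.parts - l.parts.count 1 - 1)) • (uP l * uv 1)
        + dxA (uv 0 * uP l)
        + ∑ m : (n+1).Partition, if lexLt m (addOne l) then dc m • uP m else 0 :=
  stmt2_general n l

end RiemannPaper
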